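/- arXiv:2308.04203 — 10 statements merged into one kernel-verified Lean document; each statement's English description precedes it below -/
import Mathlib

section
/- If (L, *, α) is a Hom-Jacobi-Jordan algebra and (A, •, β) is a commutative Hom-associative algebra, then the tensor product L⊗A with product (x⊗a)∘(y⊗b) = (x*y)⊗(a•b) and twisting map θ = α⊗β is a Hom-Jacobi-Jordan algebra. -/
open scoped TensorProduct

theorem stmt0 {K : Type*} [Field K]
    {L : Type*} [AddCommGroup L] [Module K L]
    {A : Type*} [AddCommGroup A] [Module K A]
    (mL : L →ₗ[K] L →ₗ[K] L) (αL : Module.End K L)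
    (mA : A →ₗ[K] A →ₗ[K] A) (β : Module.End K A)
    (hLcomm : ∀ x y, mL x y = mL y x)
    (hLmult : ∀ x y, αL (mL x y) = mL (αL x) (αL y))
    (hLjac : ∀ x y z, mL (mL x y) (αL z) + mL (mL y z) (αL x) + mL (mL z x) (αL y) = 0)
    (hAcomm : ∀ a b, mA a b = mA b a)
    (hAmult : ∀ a b, β (mA a b) = mA (β a) (β b))
    (hAassoc : ∀ a b c, mA (mA a b) (β c) = mA (β a) (mA b c)) :
    (∀ u v : L ⊗[K] A, TensorProduct.map₂ mL mA u v = TensorProduct.map₂ mL mA v u) ∧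
    (∀ u v : L ⊗[K] A, TensorProduct.map αL β (TensorProduct.map₂ mL mA u v)
        = TensorProduct.map₂ mL mA (TensorProduct.map αL β u) (TensorProduct.map αL β v)) ∧
    (∀ u v w : L ⊗[K] A,
      TensorProduct.map₂ mL mA (TensorProduct.map₂ mL mA u v) (TensorProduct.map αL β w)
      + TensorProduct.map₂ mL mA (TensorProduct.map₂ mL mA v w) (TensorProduct.map αL β u)
      + TensorProduct.map₂ mL mA (TensorProduct.map₂ mL mA w u) (TensorProduct.map αL β v) = 0) := by
  refine ⟨?_, ?_, ?_⟩
  · have h : TensorProduct.map₂ mL mA = (TensorProduct.map₂ mL mA).flip := by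
      ext x a y b
      simp [TensorProduct.map₂_apply_tmul, hLcomm x y, hAcomm a b]
    intro u v
    conv_lhs => rw [h]
    rfl
  · intro u v
    induction u with
    | zero => simp
    | add u1 u2 ih1 ih2 =>
      simp only [map_add, LinearMap.add_apply, ih1, ih2]
    | tmul x a =>
      induction v with
      | zero => simp
      | add v1 v2 ih1 ih2 =>
        simp only [map_add, ih1, ih2]
      | tmul y b =>
        simp [TensorProduct.map₂_apply_tmul, hLmult, hAmult]
  · intro u v w
    induction u with
    | zero => simp
    | add u1 u2 ih1 ih2 =>
      have h := congrArg₂ (· + ·) ih1 ih2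
      simp only [add_zero] at h
      simp only [map_add, LinearMap.add_apply]
      rw [← h]; abel
    | tmul x a =>
      induction v with
      | zero => simp
      | add v1 v2 ih1 ih2 =>
        have h := congrArg₂ (· + ·) ih1 ih2
        simp only [add_zero] at h
        simp only [map_add, LinearMap.add_apply]
        rw [← h]; abel
      | tmul y b =>
        induction w with
        | zero => simp
        | add w1 w2 ih1 ih2 =>
          have h := congrArg₂ (· + ·) ih1 ih2
          simp only [add_zero] at h
          simp only [map_add, LinearMap.add_apply]
          rw [← h]; abel
        | tmul z c =>
          simp only [TensorProduct.map₂_apply_tmul, TensorProduct.map_tmul]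
          have hA2 : mA (mA b c) (β a) = mA (mA a b) (β c) := by
            rw [hAcomm, hAassoc]
          have hA3 : mA (mA c a) (β b) = mA (mA a b) (β c) := by
            rw [hAcomm (mA c a) (β b), ← hAassoc, hA2]
          rw [hA2, hA3, ← TensorProduct.add_tmul, ← TensorProduct.add_tmul, hLjac,
            TensorProduct.zero_tmul]
end

section
/- Let (A, *, α) be a Hom-Jacobi-Jordan algebra and u ∈ A with α(u) = u. For any nonnegative integer k, the map D_k(u) : A → A defined by D_k(u)(v) = u * α^k(v) is an α^{k+1}-antiderivation of A, i.e., D_k(u)∘α = α∘D_k(u) and D_k(u)(v*w) = −D_k(u)(v) * α^{k+1}(w) − α^{k+1}(v) * D_k(u)(w). -/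
theorem stmt4 {K : Type*} [Field K] {A : Type*} [AddCommGroup A] [Module K A]
    (mm : A →ₗ[K] A →ₗ[K] A) (al : Module.End K A)
    (hcomm : ∀ x y, mm x y = mm y x)
    (hmult : ∀ x y, al (mm x y) = mm (al x) (al y))
    (hjac : ∀ x y z, mm (mm x y) (al z) + mm (mm y z) (al x) + mm (mm z x) (al y) = 0)
    (u : A) (hu : al u = u) (k : ℕ) :
    (∀ v, mm u ((al ^ k) (al v)) = al (mm u ((al ^ k) v))) ∧
    (∀ v w, mm u ((al ^ k) (mm v w))
      = -(mm (mm u ((al ^ k) v)) ((al ^ (k + 1)) w))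
        - mm ((al ^ (k + 1)) v) (mm u ((al ^ k) w))) := by
  have hpow : ∀ n x y, (al ^ n) (mm x y) = mm ((al ^ n) x) ((al ^ n) y) := by
    intro n
    induction n with
    | zero => simp
    | succ n ih =>
      intro x y
      simp only [pow_succ, Module.End.mul_apply, hmult, ih]
  have hswap : ∀ x, (al ^ k) (al x) = al ((al ^ k) x) := by
    intro x
    rw [← Module.End.mul_apply, ← Module.End.mul_apply, ← pow_succ, ← pow_succ']
  constructor
  · intro v
    rw [hswap, hmult, hu]
  · intro v w
    have hj := hjac ((al ^ k) v) ((al ^ k) w) u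
    rw [hu] at hj
    have hp1 : (al ^ (k+1)) v = al ((al ^ k) v) := by
      rw [pow_succ, Module.End.mul_apply, hswap]
    have hp2 : (al ^ (k+1)) w = al ((al ^ k) w) := by
      rw [pow_succ, Module.End.mul_apply, hswap]
    rw [hpow k v w, hcomm u (mm _ _), hp1, hp2]
    rw [hcomm ((al ^ k) w) u, hcomm (mm u ((al ^ k) w)) (al ((al ^ k) v))] at hj
    exact eq_sub_of_add_eq (eq_neg_of_add_eq_zero_left hj)
end

section
/- If D₁ is an α^k-derivation and D₂ is an α^s-derivation of a Hom-Jacobi-Jordan algebra (A, *, α), then their commutator [D₁, D₂] = D₁D₂ − D₂D₁ is an α^{k+s}-derivation of A. -/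
theorem stmt5 {K : Type*} [Field K] {A : Type*} [AddCommGroup A] [Module K A]
    (mm : A →ₗ[K] A →ₗ[K] A) (al : Module.End K A)
    (hcomm : ∀ x y, mm x y = mm y x)
    (hmult : ∀ x y, al (mm x y) = mm (al x) (al y))
    (hjac : ∀ x y z, mm (mm x y) (al z) + mm (mm y z) (al x) + mm (mm z x) (al y) = 0)
    (k s : ℕ) (D₁ D₂ : Module.End K A)
    (hD₁al : ∀ x, D₁ (al x) = al (D₁ x))
    (hD₁ : ∀ u v, D₁ (mm u v) = mm (D₁ u) ((al ^ k) v) + mm ((al ^ k) u) (D₁ v))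
    (hD₂al : ∀ x, D₂ (al x) = al (D₂ x))
    (hD₂ : ∀ u v, D₂ (mm u v) = mm (D₂ u) ((al ^ s) v) + mm ((al ^ s) u) (D₂ v)) :
    (∀ x, (D₁ ∘ₗ D₂ - D₂ ∘ₗ D₁) (al x) = al ((D₁ ∘ₗ D₂ - D₂ ∘ₗ D₁) x)) ∧
    (∀ u v, (D₁ ∘ₗ D₂ - D₂ ∘ₗ D₁) (mm u v)
      = mm ((D₁ ∘ₗ D₂ - D₂ ∘ₗ D₁) u) ((al ^ (k + s)) v)
        + mm ((al ^ (k + s)) u) ((D₁ ∘ₗ D₂ - D₂ ∘ₗ D₁) v)) := by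
  have hD₁pow : ∀ (n : ℕ) (x : A), D₁ ((al ^ n) x) = (al ^ n) (D₁ x) := by
    intro n
    induction n with
    | zero => intro x; simp
    | succ m ih =>
      intro x
      rw [pow_succ', Module.End.mul_apply, Module.End.mul_apply, hD₁al, ih]
  have hD₂pow : ∀ (n : ℕ) (x : A), D₂ ((al ^ n) x) = (al ^ n) (D₂ x) := by
    intro n
    induction n with
    | zero => intro x; simp
    | succ m ih =>
      intro x
      rw [pow_succ', Module.End.mul_apply, Module.End.mul_apply, hD₂al, ih]
  constructor
  · intro x
    simp [hD₁al, hD₂al]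
  · intro u v
    have hks : ∀ x : A, (al ^ (k + s)) x = (al ^ k) ((al ^ s) x) := by
      intro x; rw [pow_add]; rfl
    simp only [LinearMap.sub_apply, LinearMap.comp_apply]
    rw [hD₂ u v, map_add, hD₁, hD₁, hD₁ u v, map_add, hD₂, hD₂,
      hD₁pow, hD₁pow, hD₂pow, hD₂pow, hks u, hks v]
    have h1 : (al ^ s) ((al ^ k) u) = (al ^ k) ((al ^ s) u) := by
      rw [← Module.End.mul_apply, ← Module.End.mul_apply, ← pow_add, ← pow_add, Nat.add_comm]
    have h2 : (al ^ s) ((al ^ k) v) = (al ^ k) ((al ^ s) v) := by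
      rw [← Module.End.mul_apply, ← Module.End.mul_apply, ← pow_add, ← pow_add, Nat.add_comm]
    rw [h1, h2]
    simp only [map_sub, LinearMap.sub_apply]
    abel
end

section
/- If D₁ is an α^k-antiderivation and D₂ is an α^s-antiderivation of a Hom-Jacobi-Jordan algebra (A, *, α), then their commutator [D₁, D₂] = D₁D₂ − D₂D₁ is an α^{k+s}-derivation of A. -/
theorem stmt6 {K : Type*} [Field K] {A : Type*} [AddCommGroup A] [Module K A]
    (mm : A →ₗ[K] A →ₗ[K] A) (al : Module.End K A)
    (hcomm : ∀ x y, mm x y = mm y x)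
    (hmult : ∀ x y, al (mm x y) = mm (al x) (al y))
    (hjac : ∀ x y z, mm (mm x y) (al z) + mm (mm y z) (al x) + mm (mm z x) (al y) = 0)
    (k s : ℕ) (D₁ D₂ : Module.End K A)
    (hD₁al : ∀ x, D₁ (al x) = al (D₁ x))
    (hD₁ : ∀ u v, D₁ (mm u v) = -(mm (D₁ u) ((al ^ k) v)) - mm ((al ^ k) u) (D₁ v))
    (hD₂al : ∀ x, D₂ (al x) = al (D₂ x))
    (hD₂ : ∀ u v, D₂ (mm u v) = -(mm (D₂ u) ((al ^ s) v)) - mm ((al ^ s) u) (D₂ v)) :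
    (∀ x, (D₁ ∘ₗ D₂ - D₂ ∘ₗ D₁) (al x) = al ((D₁ ∘ₗ D₂ - D₂ ∘ₗ D₁) x)) ∧
    (∀ u v, (D₁ ∘ₗ D₂ - D₂ ∘ₗ D₁) (mm u v)
      = mm ((D₁ ∘ₗ D₂ - D₂ ∘ₗ D₁) u) ((al ^ (k + s)) v)
        + mm ((al ^ (k + s)) u) ((D₁ ∘ₗ D₂ - D₂ ∘ₗ D₁) v)) := by
  have hD₁pow : ∀ (n : ℕ) (x : A), D₁ ((al ^ n) x) = (al ^ n) (D₁ x) := by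
    intro n
    induction n with
    | zero => intro x; simp
    | succ n ih =>
      intro x
      rw [pow_succ, Module.End.mul_apply, Module.End.mul_apply, ih, hD₁al]
  have hD₂pow : ∀ (n : ℕ) (x : A), D₂ ((al ^ n) x) = (al ^ n) (D₂ x) := by
    intro n
    induction n with
    | zero => intro x; simp
    | succ n ih =>
      intro x
      rw [pow_succ, Module.End.mul_apply, Module.End.mul_apply, ih, hD₂al]
  have hpowadd : ∀ (x : A), (al ^ k) ((al ^ s) x) = (al ^ (k + s)) x := by
    intro x
    rw [pow_add, Module.End.mul_apply]
  have hpowadd' : ∀ (x : A), (al ^ s) ((al ^ k) x) = (al ^ (k + s)) x := by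
    intro x
    rw [add_comm k s, pow_add, Module.End.mul_apply]
  constructor
  · intro x
    simp only [LinearMap.sub_apply, LinearMap.comp_apply, map_sub, hD₁al, hD₂al]
  · intro u v
    simp only [LinearMap.sub_apply, LinearMap.comp_apply]
    rw [hD₂ u v, hD₁ u v]
    simp only [map_sub, map_neg, LinearMap.sub_apply, LinearMap.neg_apply]
    rw [hD₁ (D₂ u) ((al ^ s) v), hD₁ ((al ^ s) u) (D₂ v),
        hD₂ (D₁ u) ((al ^ k) v), hD₂ ((al ^ k) u) (D₁ v),
        hD₁pow, hD₁pow, hD₂pow, hD₂pow, hpowadd, hpowadd, hpowadd', hpowadd']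
    abel
end

section
/- If D₁ is an α^k-antiderivation and D₂ is an α^s-derivation of a Hom-Jacobi-Jordan algebra (A, *, α), then [D₁, D₂] = D₁D₂ − D₂D₁ is an α^{k+s}-antiderivation of A. -/
theorem stmt7 {K : Type*} [Field K] {A : Type*} [AddCommGroup A] [Module K A]
    (mm : A →ₗ[K] A →ₗ[K] A) (al : Module.End K A)
    (hcomm : ∀ x y, mm x y = mm y x)
    (hmult : ∀ x y, al (mm x y) = mm (al x) (al y))
    (hjac : ∀ x y z, mm (mm x y) (al z) + mm (mm y z) (al x) + mm (mm z x) (al y) = 0)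
    (k s : ℕ) (D₁ D₂ : Module.End K A)
    (hD₁al : ∀ x, D₁ (al x) = al (D₁ x))
    (hD₁ : ∀ u v, D₁ (mm u v) = -(mm (D₁ u) ((al ^ k) v)) - mm ((al ^ k) u) (D₁ v))
    (hD₂al : ∀ x, D₂ (al x) = al (D₂ x))
    (hD₂ : ∀ u v, D₂ (mm u v) = mm (D₂ u) ((al ^ s) v) + mm ((al ^ s) u) (D₂ v)) :
    (∀ x, (D₁ ∘ₗ D₂ - D₂ ∘ₗ D₁) (al x) = al ((D₁ ∘ₗ D₂ - D₂ ∘ₗ D₁) x)) ∧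
    (∀ u v, (D₁ ∘ₗ D₂ - D₂ ∘ₗ D₁) (mm u v)
      = -(mm ((D₁ ∘ₗ D₂ - D₂ ∘ₗ D₁) u) ((al ^ (k + s)) v))
        - mm ((al ^ (k + s)) u) ((D₁ ∘ₗ D₂ - D₂ ∘ₗ D₁) v)) := by
  have hD₁pow : ∀ (n : ℕ) (x : A), D₁ ((al ^ n) x) = (al ^ n) (D₁ x) := by
    intro n
    induction n with
    | zero => simp
    | succ m ih =>
      intro x
      simp only [pow_succ, Module.End.mul_apply, hD₁al, ih]
  have hD₂pow : ∀ (n : ℕ) (x : A), D₂ ((al ^ n) x) = (al ^ n) (D₂ x) := by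
    intro n
    induction n with
    | zero => simp
    | succ m ih =>
      intro x
      simp only [pow_succ, Module.End.mul_apply, hD₂al, ih]
  have hks : ∀ x : A, (al ^ k) ((al ^ s) x) = (al ^ (k + s)) x := by
    intro x; rw [pow_add]; rfl
  have hsk : ∀ x : A, (al ^ s) ((al ^ k) x) = (al ^ (k + s)) x := by
    intro x; rw [add_comm, pow_add]; rfl
  constructor
  · intro x
    simp only [LinearMap.sub_apply, LinearMap.comp_apply, map_sub, hD₁al, hD₂al]
  · intro u v
    simp only [LinearMap.sub_apply, LinearMap.comp_apply, map_sub, hD₁, hD₂, map_add,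
      map_neg, map_sub, LinearMap.add_apply, LinearMap.neg_apply, LinearMap.sub_apply,
      hD₁pow, hD₂pow, hks, hsk]
    abel
end

section
/- Let (A, *, α) be a Hom-Jacobi-Jordan algebra, (V, ρ, φ) a representation, and u ∈ V with φ(u) = u. For any nonnegative integer k, the map D_k(u) : A → V, D_k(u)(v) = ρ(α^k(v))u, is an α^{k+1}-antiderivation with values in V: D_k(u)∘α = φ∘D_k(u) and D_k(u)(v*w) = −ρ(α^{k+1}(v))D_k(u)(w) − ρ(α^{k+1}(w))D_k(u)(v). -/
theorem stmt11 {K : Type*} [Field K] {A : Type*} [AddCommGroup A] [Module K A]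
    {V : Type*} [AddCommGroup V] [Module K V]
    (mm : A →ₗ[K] A →ₗ[K] A) (al : Module.End K A)
    (hcomm : ∀ x y, mm x y = mm y x)
    (hmult : ∀ x y, al (mm x y) = mm (al x) (al y))
    (hjac : ∀ x y z, mm (mm x y) (al z) + mm (mm y z) (al x) + mm (mm z x) (al y) = 0)
    (ρ : A →ₗ[K] Module.End K V) (φ : Module.End K V)
    (hr1 : ∀ x v, φ (ρ x v) = ρ (al x) (φ v))
    (hr2 : ∀ x y v, ρ (mm x y) (φ v) = -(ρ (al x) (ρ y v)) - ρ (al y) (ρ x v))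
    (u : V) (hu : φ u = u) (k : ℕ) :
    (∀ v, ρ ((al ^ k) (al v)) u = φ (ρ ((al ^ k) v) u)) ∧
    (∀ v w, ρ ((al ^ k) (mm v w)) u
      = -(ρ ((al ^ (k + 1)) v) (ρ ((al ^ k) w) u))
        - ρ ((al ^ (k + 1)) w) (ρ ((al ^ k) v) u)) := by
  have hmultk : ∀ v w, (al ^ k) (mm v w) = mm ((al ^ k) v) ((al ^ k) w) := by
    induction k with
    | zero => simp
    | succ n ih =>
      intro v w
      have : al ^ (n + 1) = al * al ^ n := pow_succ' al n
      simp only [this, Module.End.mul_apply, ih, hmult]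
  constructor
  · intro v
    have h1 : (al ^ k) (al v) = al ((al ^ k) v) := by
      calc (al ^ k) (al v) = (al ^ k * al) v := rfl
        _ = (al * al ^ k) v := by rw [(Commute.pow_self al k).eq]
        _ = al ((al ^ k) v) := rfl
    rw [h1, hr1, hu]
  · intro v w
    have hpow : ∀ x, (al ^ (k + 1)) x = al ((al ^ k) x) := by
      intro x; rw [pow_succ']; exact Module.End.mul_apply al (al^k) x
    rw [hmultk, hpow, hpow]
    conv_lhs => rw [← hu]
    exact hr2 _ _ _
end

section
/- Let (A, *, α) be a Hom-Jacobi-Jordan algebra and θ : A×A → 𝕂 a symmetric bilinear map with θ(α(x), α(y)) = θ(x, y). On 𝒜 = A ⊕ 𝕂 define μ_θ(u+s, v+t) = u*v + θ(u,v) and α̃(u+s) = α(u)+s. Then (𝒜, μ_θ, α̃) is a Hom-Jacobi-Jordan algebra if and only if θ((x*y), α(z)) + θ((y*z), α(x)) + θ((z*x), α(y)) = 0 for all x, y, z ∈ A. -/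
theorem stmt14 {K : Type*} [Field K] {A : Type*} [AddCommGroup A] [Module K A]
    (mm : A →ₗ[K] A →ₗ[K] A) (al : Module.End K A)
    (hcomm : ∀ x y, mm x y = mm y x)
    (hmult : ∀ x y, al (mm x y) = mm (al x) (al y))
    (hjac : ∀ x y z, mm (mm x y) (al z) + mm (mm y z) (al x) + mm (mm z x) (al y) = 0)
    (θ : A →ₗ[K] A →ₗ[K] K)
    (hθsym : ∀ x y, θ x y = θ y x)
    (hθal : ∀ x y, θ (al x) (al y) = θ x y)
    (md : A × K → A × K → A × K)
    (hmd : ∀ p q, md p q = (mm p.1 q.1, θ p.1 q.1))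
    (at' : A × K → A × K)
    (hat : ∀ p, at' p = (al p.1, p.2)) :
    ((∀ p q, md p q = md q p) ∧
     (∀ p q, at' (md p q) = md (at' p) (at' q)) ∧
     (∀ p q r, md (md p q) (at' r) + md (md q r) (at' p) + md (md r p) (at' q) = 0))
    ↔ (∀ x y z : A, θ (mm x y) (al z) + θ (mm y z) (al x) + θ (mm z x) (al y) = 0) := by
  constructor
  · rintro ⟨-, -, hj⟩ x y z
    have := congrArg Prod.snd (hj (x, 0) (y, 0) (z, 0))
    simp only [hmd, hat, Prod.fst, Prod.snd] at this
    simpa using this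
  · intro h
    refine ⟨fun p q => ?_, fun p q => ?_, fun p q r => ?_⟩
    · rw [hmd, hmd, hcomm, hθsym]
    · rw [hmd, hat, hat, hat, hmd]
      simp [hmult, hθal]
    · simp only [hmd, hat, Prod.mk_add_mk, Prod.mk_eq_zero]
      exact ⟨hjac _ _ _, by simpa using h p.1 q.1 r.1⟩
end

section
/- Let (A, *, α) be a regular Hom-Jacobi-Jordan algebra (α invertible) and s an integer. Define ad_s(u)(v) = α^s(u)*v. Then (A, ad_s, α) is a representation of (A, *, α), i.e., α∘ad_s(u) = ad_s(α(u))∘α and ad_s(u*v)∘α = −ad_s(α(u))∘ad_s(v) − ad_s(α(v))∘ad_s(u) for all u, v ∈ A. -/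
/-!
Multiplicativity of `α` passes to every power `α ^ s`, and `α ^ s` commutes with `α`.
The first identity is then multiplicativity of `α`, and the second is the Hom-Jacobi identity
applied to `α ^ s u`, `α ^ s v`, `w`, rearranged by commutativity.
-/

namespace LinearMap

variable {R A : Type*} [CommSemiring R] [AddCommMonoid A] [Module R A]

def autSubgroup (m : A →ₗ[R] A →ₗ[R] A) : Subgroup (A ≃ₗ[R] A) where
  carrier := {f | ∀ x y, f (m x y) = m (f x) (f y)}
  one_mem' _ _ := rfl
  mul_mem' {f g} hf hg x y := (congrArg f (hg x y)).trans (hf _ _)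
  inv_mem' {f} hf x y := by
    apply f.injective
    rw [LinearEquiv.coe_inv, hf, f.apply_symm_apply, f.apply_symm_apply, f.apply_symm_apply]

theorem zpow_apply_map_mul {m : A →ₗ[R] A →ₗ[R] A} {f : A ≃ₗ[R] A}
    (hf : ∀ x y, f (m x y) = m (f x) (f y)) (s : ℤ) (x y : A) :
    (f ^ s) (m x y) = m ((f ^ s) x) ((f ^ s) y) :=
  zpow_mem (show f ∈ autSubgroup m from hf) s x y

end LinearMap

theorem LinearEquiv.zpow_apply_self_apply {R A : Type*} [Semiring R] [AddCommMonoid A]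
    [Module R A] (f : A ≃ₗ[R] A) (s : ℤ) (x : A) : (f ^ s) (f x) = f ((f ^ s) x) :=
  LinearEquiv.congr_fun ((Commute.refl f).zpow_left s) x

theorem stmt15 {K : Type*} [Field K] {A : Type*} [AddCommGroup A] [Module K A]
    (mm : A →ₗ[K] A →ₗ[K] A) (al : A ≃ₗ[K] A)
    (hcomm : ∀ x y, mm x y = mm y x)
    (hmult : ∀ x y, al (mm x y) = mm (al x) (al y))
    (hjac : ∀ x y z, mm (mm x y) (al z) + mm (mm y z) (al x) + mm (mm z x) (al y) = 0)
    (s : ℤ) :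
    (∀ u v : A, al (mm ((al ^ s) u) v) = mm ((al ^ s) (al u)) (al v)) ∧
    (∀ u v w : A, mm ((al ^ s) (mm u v)) (al w)
      = -(mm ((al ^ s) (al u)) (mm ((al ^ s) v) w))
        - mm ((al ^ s) (al v)) (mm ((al ^ s) u) w)) := by
  simp only [al.zpow_apply_self_apply, LinearMap.zpow_apply_map_mul hmult]
  refine ⟨fun u v => hmult _ _, fun u v w => ?_⟩
  have hjac' := hjac ((al ^ s) u) ((al ^ s) v) w
  rw [hcomm w, hcomm (mm _ w), hcomm (mm _ w), add_assoc] at hjac'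
  rw [eq_neg_of_add_eq_zero_left hjac', neg_add, sub_eq_add_neg]
end

section
/- Let T : V → A be a relative Rota-Baxter operator on a Hom-Jacobi-Jordan algebra (A, *, α) with respect to a representation (V, ρ, φ). Then (V, *_T, φ) with u *_T v := ρ(T(u))v + ρ(T(v))u is a Hom-Jacobi-Jordan algebra. -/
/-- The product `u *_T v := ρ(T u) v + ρ(T v) u` induced by a relative
Rota-Baxter operator `T`. -/
def sT {K : Type*} [Field K] {A : Type*} [AddCommGroup A] [Module K A]
    {V : Type*} [AddCommGroup V] [Module K V]
    (ρ : A →ₗ[K] Module.End K V) (T : V →ₗ[K] A) (u v : V) : V :=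
  ρ (T u) v + ρ (T v) u

theorem stmt16 {K : Type*} [Field K] {A : Type*} [AddCommGroup A] [Module K A]
    {V : Type*} [AddCommGroup V] [Module K V]
    (mm : A →ₗ[K] A →ₗ[K] A) (al : Module.End K A)
    (hcomm : ∀ x y, mm x y = mm y x)
    (hmult : ∀ x y, al (mm x y) = mm (al x) (al y))
    (hjac : ∀ x y z, mm (mm x y) (al z) + mm (mm y z) (al x) + mm (mm z x) (al y) = 0)
    (ρ : A →ₗ[K] Module.End K V) (φ : Module.End K V)
    (hr1 : ∀ x v, φ (ρ x v) = ρ (al x) (φ v))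
    (hr2 : ∀ x y v, ρ (mm x y) (φ v) = -(ρ (al x) (ρ y v)) - ρ (al y) (ρ x v))
    (T : V →ₗ[K] A)
    (hT1 : ∀ v, T (φ v) = al (T v))
    (hT2 : ∀ u v, mm (T u) (T v) = T (ρ (T u) v + ρ (T v) u)) :
    (∀ u v, sT ρ T u v = sT ρ T v u) ∧
    (∀ u v, φ (sT ρ T u v) = sT ρ T (φ u) (φ v)) ∧
    (∀ u v w, sT ρ T (sT ρ T u v) (φ w) + sT ρ T (sT ρ T v w) (φ u)
      + sT ρ T (sT ρ T w u) (φ v) = 0) := by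
  refine ⟨fun u v => by simp [sT]; abel, fun u v => by simp [sT, hr1, hT1], fun u v w => ?_⟩
  simp only [sT, ← hT2, hT1, hr2, map_add, LinearMap.add_apply]
  abel
end

section
/- Let T : V → A be a relative Rota-Baxter operator on a Hom-Jacobi-Jordan algebra (A, *, α) with respect to (V, ρ, φ). Define ρ_T : V → gl(A) by ρ_T(u)x = T(u)*x − T(ρ(x)u). Then (A, ρ_T, α) is a representation of the Hom-Jacobi-Jordan algebra (V, *_T, φ) where u *_T v = ρ(T(u))v + ρ(T(v))u. -/
/-- The map `ρ_T(u) x := T(u) * x − T(ρ(x) u)`. -/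
def rhoT {K : Type*} [Field K] {A : Type*} [AddCommGroup A] [Module K A]
    {V : Type*} [AddCommGroup V] [Module K V]
    (mm : A →ₗ[K] A →ₗ[K] A) (ρ : A →ₗ[K] Module.End K V) (T : V →ₗ[K] A)
    (u : V) (x : A) : A :=
  mm (T u) x - T (ρ x u)

theorem stmt17 {K : Type*} [Field K] {A : Type*} [AddCommGroup A] [Module K A]
    {V : Type*} [AddCommGroup V] [Module K V]
    (mm : A →ₗ[K] A →ₗ[K] A) (al : Module.End K A)
    (hcomm : ∀ x y, mm x y = mm y x)
    (hmult : ∀ x y, al (mm x y) = mm (al x) (al y))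
    (hjac : ∀ x y z, mm (mm x y) (al z) + mm (mm y z) (al x) + mm (mm z x) (al y) = 0)
    (ρ : A →ₗ[K] Module.End K V) (φ : Module.End K V)
    (hr1 : ∀ x v, φ (ρ x v) = ρ (al x) (φ v))
    (hr2 : ∀ x y v, ρ (mm x y) (φ v) = -(ρ (al x) (ρ y v)) - ρ (al y) (ρ x v))
    (T : V →ₗ[K] A)
    (hT1 : ∀ v, T (φ v) = al (T v))
    (hT2 : ∀ u v, mm (T u) (T v) = T (ρ (T u) v + ρ (T v) u)) :
    (∀ (u : V) (x : A), al (rhoT mm ρ T u x) = rhoT mm ρ T (φ u) (al x)) ∧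
    (∀ (u v : V) (x : A),
      rhoT mm ρ T (sT ρ T u v) (al x)
        = -(rhoT mm ρ T (φ u) (rhoT mm ρ T v x)) - rhoT mm ρ T (φ v) (rhoT mm ρ T u x)) := by
  constructor
  · intro u x
    simp only [rhoT, map_sub]
    rw [hmult, show al (T (ρ x u)) = T (φ (ρ x u)) from (hT1 _).symm, hr1, hT1]
  · intro u v x
    simp only [rhoT, sT, map_add, map_sub, LinearMap.add_apply, LinearMap.sub_apply,
      map_neg, LinearMap.neg_apply]
    have key1 : mm (T (ρ (T u) v)) (al x) + mm (T (ρ (T v) u)) (al x)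
        = -(mm (al (T u)) (mm (T v) x)) - mm (al (T v)) (mm (T u) x) := by
      have h0 : mm (T (ρ (T u) v)) (al x) + mm (T (ρ (T v) u)) (al x)
          = mm (mm (T u) (T v)) (al x) := by
        rw [hT2, map_add, map_add, LinearMap.add_apply]
      rw [h0]
      have h := hjac (T u) (T v) x
      rw [hcomm (mm (T v) x) (al (T u)), hcomm (mm x (T u)) (al (T v)),
        hcomm x (T u), add_assoc] at h
      rw [eq_neg_of_add_eq_zero_left h, neg_add, ← sub_eq_add_neg]
    have key2 : ∀ (w w' : V), ρ (mm (T w) x) (φ w')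
        = -(ρ (al (T w)) (ρ x w')) - ρ (al x) (ρ (T w) w') := fun w w' => hr2 (T w) x w'
    have key3 : ∀ (w w' : V), mm (T (φ w)) (T (ρ x w'))
        = T (ρ (al (T w)) (ρ x w')) + T (ρ (T (ρ x w')) (φ w)) := by
      intro w w'
      rw [hT2, map_add, hT1]
    rw [key1, key2, key2, key3, key3, hT1, hT1]
    simp only [map_add, map_sub, map_neg]
    abel
end
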